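/- Suppose p = √2−1, and let T = inf{n ≥ 1 : S_n = 0}. Then P(ξ_1 = 1 and T < ∞) = p. -/

import Mathlib

open MeasureTheory ProbabilityTheory Filter
open scoped ENNReal Classical

noncomputable section

variable {Ω : Type*} [MeasurableSpace Ω]

/-- The `k`-th step of the ladder chain `L(2,2,p)` built from the driving
sequence `ξ` (indexed from 1): `X₁ = ±1` according to `ξ₁`, and for `k ≥ 2`,
`X_k = -1` if `ξ_k = -1`, `X_k = 2` if `ξ_k = ξ_{k-1} = 1`, and `X_k = 1`
if `ξ_k = 1, ξ_{k-1} = -1`. -/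
def ladderX (ξ : ℕ → Ω → ℤ) (k : ℕ) (ω : Ω) : ℤ :=
  if k = 1 then (if ξ 1 ω = 1 then 1 else -1)
  else if ξ k ω = -1 then -1
  else if ξ (k - 1) ω = 1 then 2 else 1

/-- The ladder chain `S_n = X₁ + ⋯ + X_n` (with `S_0 = 0`). -/
def ladderS (ξ : ℕ → Ω → ℤ) (n : ℕ) (ω : Ω) : ℤ :=
  ∑ k ∈ Finset.Icc 1 n, ladderX ξ k ω

/-!
When `p ^ 2 + 2 * p = 1`, the process `M n = S (n + 1) + p * 1{ξ (n + 1) = 1}` is a martingale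
for the filtration of `ξ 1, …, ξ (n + 1)`: its increment is a predictable factor (`3 + p` after an
up step, `2 + p` after a down step) times the centred noise `1{ξ (n + 2) = 1} - p`. All increments
have absolute value between `1` and `2`, so by the one-sided martingale bound `M` almost surely
neither converges nor stays bounded below. But the walk steps down by at most `1`, so a path that
starts with an up step and never returns to `0` keeps `S ≥ 1`, hence `M ≥ 1`. Thus a.s. every path
with `ξ 1 = 1` returns to `0`, and the probability is `P(ξ 1 = 1) = p`.
-/

open scoped NNReal Topology

section Martingale

variable {μ : Measure Ω}

lemma not_tendsto_of_le_abs_sub {u : ℕ → ℝ} {δ : ℝ} (hδ : 0 < δ)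
    (hu : ∀ n, δ ≤ |u (n + 1) - u n|) (c : ℝ) : ¬Tendsto u atTop (𝓝 c) := by
  intro hc
  have hinc : Tendsto (fun n => u (n + 1) - u n) atTop (𝓝 0) := by
    simpa using (hc.comp (tendsto_add_atTop_nat 1)).sub hc
  obtain ⟨N, hN⟩ := Metric.tendsto_atTop.1 hinc δ hδ
  have hN' := hN N le_rfl
  rw [Real.dist_eq, sub_zero] at hN'
  exact (hu N).not_gt hN'

theorem MeasureTheory.Martingale.ae_not_bddBelow_of_le_abs_sub [IsFiniteMeasure μ]
    {f : ℕ → Ω → ℝ} {ℱ : Filtration ℕ ‹MeasurableSpace Ω›} (hf : Martingale f ℱ μ) {R : ℝ≥0}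
    (hbdd : ∀ᵐ ω ∂μ, ∀ i, |f (i + 1) ω - f i ω| ≤ R) {δ : ℝ} (hδ : 0 < δ)
    (hgap : ∀ᵐ ω ∂μ, ∀ i, δ ≤ |f (i + 1) ω - f i ω|) :
    ∀ᵐ ω ∂μ, ¬BddBelow (Set.range fun n => f n ω) := by
  filter_upwards [hf.bddAbove_range_iff_bddBelow_range hbdd,
    hf.submartingale.bddAbove_iff_exists_tendsto hbdd, hgap] with ω habove hconv hgapω hbelow
  obtain ⟨c, hc⟩ := hconv.1 (habove.2 hbelow)
  exact not_tendsto_of_le_abs_sub hδ hgapω c hc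

end Martingale

section Ladder

variable (ξ : ℕ → Ω → ℤ) (p : ℝ)

section Pathwise

omit [MeasurableSpace Ω]

lemma ladderS_succ (n : ℕ) (ω : Ω) :
    ladderS ξ (n + 1) ω = ladderS ξ n ω + ladderX ξ (n + 1) ω :=
  Finset.sum_Icc_succ_top (by omega) _

lemma ladderX_add_two (n : ℕ) (ω : Ω) :
    ladderX ξ (n + 2) ω = if ξ (n + 2) ω = -1 then -1 else if ξ (n + 1) ω = 1 then 2 else 1 := by
  simp [ladderX]

lemma neg_one_le_ladderX (k : ℕ) (ω : Ω) : -1 ≤ ladderX ξ k ω := by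
  unfold ladderX; split_ifs <;> norm_num

lemma abs_ladderX_le (k : ℕ) (ω : Ω) : |ladderX ξ k ω| ≤ 2 := by
  unfold ladderX; split_ifs <;> norm_num

variable {ξ} in
lemma one_le_ladderS_of_ne_zero {ω : Ω} (h1 : ξ 1 ω = 1)
    (h : ∀ n, 1 ≤ n → ladderS ξ n ω ≠ 0) {n : ℕ} (hn : 1 ≤ n) : 1 ≤ ladderS ξ n ω := by
  induction n, hn using Nat.le_induction with
  | base => simp [ladderS, ladderX, h1]
  | succ n hn ih =>
    have hne := h (n + 1) (by omega)
    have hX := neg_one_le_ladderX ξ (n + 1) ω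
    rw [ladderS_succ] at hne ⊢
    omega

def ladderMart (n : ℕ) (ω : Ω) : ℝ :=
  ladderS ξ (n + 1) ω + p * {ω | ξ (n + 1) ω = 1}.indicator 1 ω

def ladderNoise (k : ℕ) (ω : Ω) : ℝ :=
  {ω | ξ k ω = 1}.indicator 1 ω - p

def ladderGain (n : ℕ) (ω : Ω) : ℝ :=
  if ξ (n + 1) ω = 1 then 3 + p else 2 + p

variable {ξ p}

-- `p ^ 2 + 2 * p = 1` is exactly what turns each of the four cases into this product.
lemma ladderMart_succ_sub (hval : ∀ n ω, ξ n ω = 1 ∨ ξ n ω = -1) (hp : p ^ 2 + 2 * p = 1)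
    (n : ℕ) (ω : Ω) :
    ladderMart ξ p (n + 1) ω - ladderMart ξ p n ω =
      ladderGain ξ p n ω * ladderNoise ξ p (n + 2) ω := by
  have hS := ladderS_succ ξ (n + 1) ω
  rw [ladderX_add_two] at hS
  rcases hval (n + 1) ω with h1 | h1 <;> rcases hval (n + 2) ω with h2 | h2 <;>
    simp [ladderMart, ladderGain, ladderNoise, hS, h1, h2] <;> linarith

lemma abs_ladderGain_mul_ladderNoise_mem (hp0 : 0 ≤ p) (hp : p ^ 2 + 2 * p = 1) (n : ℕ) (ω : Ω) :
    |ladderGain ξ p n ω * ladderNoise ξ p (n + 2) ω| ∈ Set.Icc 1 2 := by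
  have hp1 : p ≤ 1 / 2 := by nlinarith
  have h3 : |3 + p| = 3 + p := abs_of_nonneg (by linarith)
  have h2 : |2 + p| = 2 + p := abs_of_nonneg (by linarith)
  have h1 : |1 - p| = 1 - p := abs_of_nonneg (by linarith)
  rcases eq_or_ne (ξ (n + 1) ω) 1 with hξ | hξ <;>
    rcases eq_or_ne (ξ (n + 2) ω) 1 with hξ' | hξ' <;>
    simp [ladderGain, ladderNoise, hξ, hξ', abs_of_nonneg hp0, h1, h2, h3] <;>
    constructor <;> nlinarith

section Measurability

variable {m : MeasurableSpace Ω}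

lemma measurable_ladderX {k : ℕ} (hk : 1 ≤ k) (h : ∀ i, 1 ≤ i → i ≤ k → Measurable[m] (ξ i)) :
    Measurable[m] (ladderX ξ k) := by
  have hset : ∀ i, 1 ≤ i → i ≤ k → ∀ c : ℤ, MeasurableSet[m] {ω | ξ i ω = c} :=
    fun i hi hik c => h i hi hik (measurableSet_singleton c)
  unfold ladderX
  split_ifs with hk1
  · subst hk1
    exact Measurable.ite (hset 1 le_rfl le_rfl 1) measurable_const measurable_const
  · exact Measurable.ite (hset k (by omega) le_rfl (-1)) measurable_const
      (Measurable.ite (hset (k - 1) (by omega) (by omega) 1) measurable_const measurable_const)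

lemma measurable_ladderS {n : ℕ} (h : ∀ i, 1 ≤ i → i ≤ n → Measurable[m] (ξ i)) :
    Measurable[m] (ladderS ξ n) :=
  Finset.measurable_sum _ fun _ hk =>
    measurable_ladderX (Finset.mem_Icc.1 hk).1 fun i hi hik =>
      h i hi (hik.trans (Finset.mem_Icc.1 hk).2)

lemma measurable_ladderMart {n : ℕ} (h : ∀ i, 1 ≤ i → i ≤ n + 1 → Measurable[m] (ξ i)) :
    Measurable[m] (ladderMart ξ p n) :=
  (Measurable.of_discrete.comp (measurable_ladderS h)).add
    ((measurable_one.indicator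
      (h (n + 1) (by omega) le_rfl (measurableSet_singleton 1))).const_mul p)

lemma measurable_ladderGain {n : ℕ} (h : Measurable[m] (ξ (n + 1))) :
    Measurable[m] (ladderGain ξ p n) :=
  Measurable.ite (h (measurableSet_singleton 1)) measurable_const measurable_const

lemma measurable_ladderNoise {k : ℕ} (h : Measurable[m] (ξ k)) :
    Measurable[m] (ladderNoise ξ p k) :=
  (measurable_one.indicator (h (measurableSet_singleton 1))).sub_const p

end Measurability

end Pathwise

variable (hmeas : ∀ n, Measurable (ξ n))

/-- `ladderFiltration ξ hmeas n = σ(ξ 1, …, ξ (n + 1))`, shifted so that `ladderMart ξ p n` is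
adapted. -/
def ladderFiltration : Filtration ℕ ‹MeasurableSpace Ω› :=
  Filtration.natural (fun n => ξ (n + 1)) fun n => (hmeas (n + 1)).stronglyMeasurable

variable {ξ p}

lemma measurable_ladderFiltration {n i : ℕ} (hi : 1 ≤ i) (hin : i ≤ n + 1) :
    Measurable[ladderFiltration ξ hmeas n] (ξ i) := by
  obtain ⟨j, rfl⟩ := Nat.exists_eq_add_of_le' hi
  exact (Filtration.stronglyAdapted_natural _ j).measurable.mono
    ((ladderFiltration ξ hmeas).mono (by omega)) le_rfl

variable (P : Measure Ω)

lemma indep_comap_ladderFiltration (hindep : iIndepFun ξ P) (n : ℕ) :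
    Indep (MeasurableSpace.comap (ξ (n + 2)) inferInstance) (ladderFiltration ξ hmeas n) P := by
  have h := indep_iSup_of_disjoint (fun i => (hmeas (i + 1)).comap_le)
    (hindep.precomp Nat.succ_injective) (S := {n + 1}) (T := Set.Iic n) (by simp)
  simpa [ladderFiltration, Filtration.natural] using h

variable [IsProbabilityMeasure P]

include hmeas

lemma integrable_ladderNoise (k : ℕ) : Integrable (ladderNoise ξ p k) P :=
  ((integrable_const 1).indicator (hmeas k (measurableSet_singleton 1))).sub (integrable_const p)

lemma integral_ladderNoise (hp0 : 0 ≤ p) {k : ℕ} (hprob : P {ω | ξ k ω = 1} = ENNReal.ofReal p) :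
    ∫ ω, ladderNoise ξ p k ω ∂P = 0 := by
  have hs : MeasurableSet {ω | ξ k ω = 1} := hmeas k (measurableSet_singleton 1)
  have hind : Integrable ({ω | ξ k ω = 1}.indicator (1 : Ω → ℝ)) P :=
    (integrable_const 1).indicator hs
  unfold ladderNoise
  rw [integral_sub hind (integrable_const p),
    integral_indicator_one hs, measureReal_def, hprob, ENNReal.toReal_ofReal hp0]
  simp

lemma integrable_ladderS (n : ℕ) : Integrable (fun ω => (ladderS ξ n ω : ℝ)) P := by
  simp only [ladderS, Int.cast_sum]
  refine integrable_finsetSum _ fun k hk => .of_bound ?_ 2 (ae_of_all _ fun ω => ?_)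
  · exact (Measurable.of_discrete.comp
      (measurable_ladderX (Finset.mem_Icc.1 hk).1 fun i _ _ => hmeas i)).aestronglyMeasurable
  · rw [Real.norm_eq_abs, ← Int.cast_abs]
    exact_mod_cast abs_ladderX_le ξ k ω

lemma integrable_ladderMart (n : ℕ) : Integrable (ladderMart ξ p n) P :=
  (integrable_ladderS hmeas P (n + 1)).add
    (((integrable_const 1).indicator (hmeas (n + 1) (measurableSet_singleton 1))).const_mul p)

lemma condExp_ladderMart_succ_sub (hindep : iIndepFun ξ P) (hval : ∀ n ω, ξ n ω = 1 ∨ ξ n ω = -1)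
    (hp0 : 0 ≤ p) (hp : p ^ 2 + 2 * p = 1)
    (hprob : ∀ n, 1 ≤ n → P {ω | ξ n ω = 1} = ENNReal.ofReal p) (n : ℕ) :
    P[ladderMart ξ p (n + 1) - ladderMart ξ p n | ladderFiltration ξ hmeas n] =ᵐ[P] 0 := by
  set ℱ := ladderFiltration ξ hmeas
  have hincr : ladderMart ξ p (n + 1) - ladderMart ξ p n =
      ladderGain ξ p n * ladderNoise ξ p (n + 2) :=
    funext (ladderMart_succ_sub hval hp n)
  have hnoise : P[ladderNoise ξ p (n + 2) | ℱ n] =ᵐ[P] 0 := by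
    have h := condExp_indep_eq (hmeas (n + 2)).comap_le (ℱ.le n)
      (measurable_ladderNoise (p := p) (comap_measurable (ξ (n + 2)))).stronglyMeasurable
      (indep_comap_ladderFiltration hmeas P hindep n)
    rwa [integral_ladderNoise hmeas P hp0 (hprob (n + 2) (by omega))] at h
  have hgain : StronglyMeasurable[ℱ n] (ladderGain ξ p n) :=
    (measurable_ladderGain (measurable_ladderFiltration hmeas (by omega) le_rfl)).stronglyMeasurable
  have hint : Integrable (ladderGain ξ p n * ladderNoise ξ p (n + 2)) P :=
    hincr ▸ (integrable_ladderMart hmeas P (n + 1)).sub (integrable_ladderMart hmeas P n)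
  rw [hincr]
  filter_upwards [condExp_mul_of_stronglyMeasurable_left hgain hint
    (integrable_ladderNoise hmeas P (n + 2)), hnoise] with ω hmul hzero
  simp [hmul, hzero]

lemma martingale_ladderMart (hindep : iIndepFun ξ P) (hval : ∀ n ω, ξ n ω = 1 ∨ ξ n ω = -1)
    (hp0 : 0 ≤ p) (hp : p ^ 2 + 2 * p = 1)
    (hprob : ∀ n, 1 ≤ n → P {ω | ξ n ω = 1} = ENNReal.ofReal p) :
    Martingale (ladderMart ξ p) (ladderFiltration ξ hmeas) P :=
  martingale_of_condExp_sub_eq_zero_nat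
    (fun _ => (measurable_ladderMart fun _ hi hin =>
      measurable_ladderFiltration hmeas hi hin).stronglyMeasurable)
    (integrable_ladderMart hmeas P) (condExp_ladderMart_succ_sub hmeas P hindep hval hp0 hp hprob)

lemma ae_not_bddBelow_ladderMart (hindep : iIndepFun ξ P)
    (hval : ∀ n ω, ξ n ω = 1 ∨ ξ n ω = -1) (hp0 : 0 ≤ p) (hp : p ^ 2 + 2 * p = 1)
    (hprob : ∀ n, 1 ≤ n → P {ω | ξ n ω = 1} = ENNReal.ofReal p) :
    ∀ᵐ ω ∂P, ¬BddBelow (Set.range fun n => ladderMart ξ p n ω) := by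
  have hincr n ω := ladderMart_succ_sub hval hp n ω ▸ abs_ladderGain_mul_ladderNoise_mem hp0 hp n ω
  exact (martingale_ladderMart hmeas P hindep hval hp0 hp hprob).ae_not_bddBelow_of_le_abs_sub
    (R := 2) (ae_of_all _ fun ω i => by simpa using (hincr i ω).2) one_pos
    (ae_of_all _ fun ω i => (hincr i ω).1)

theorem ae_exists_ladderS_eq_zero (hindep : iIndepFun ξ P)
    (hval : ∀ n ω, ξ n ω = 1 ∨ ξ n ω = -1) (hp0 : 0 ≤ p) (hp : p ^ 2 + 2 * p = 1)
    (hprob : ∀ n, 1 ≤ n → P {ω | ξ n ω = 1} = ENNReal.ofReal p) :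
    ∀ᵐ ω ∂P, ξ 1 ω = 1 → ∃ n, 1 ≤ n ∧ ladderS ξ n ω = 0 := by
  filter_upwards [ae_not_bddBelow_ladderMart hmeas P hindep hval hp0 hp hprob] with ω hunbdd h1
  by_contra! hne
  refine hunbdd ⟨1, ?_⟩
  rintro _ ⟨n, rfl⟩
  have hS : (1 : ℝ) ≤ ladderS ξ (n + 1) ω := by
    exact_mod_cast one_le_ladderS_of_ne_zero h1 hne (by omega)
  have hind : 0 ≤ {ω | ξ (n + 1) ω = 1}.indicator (1 : Ω → ℝ) ω :=
    Set.indicator_nonneg (fun _ _ => zero_le_one) ω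
  unfold ladderMart
  nlinarith

end Ladder

/-- If `p = √2 - 1` and `T = inf {n ≥ 1 : S_n = 0}`, then
`P(ξ₁ = 1 and T < ∞) = p`. -/
theorem ladder_return_after_up_step (p : ℝ) (hp : p = Real.sqrt 2 - 1)
    (P : Measure Ω) [IsProbabilityMeasure P]
    (ξ : ℕ → Ω → ℤ) (hmeas : ∀ n, Measurable (ξ n))
    (hindep : iIndepFun ξ P)
    (hval : ∀ n ω, ξ n ω = 1 ∨ ξ n ω = -1)
    (hprob : ∀ n, 1 ≤ n → P {ω | ξ n ω = 1} = ENNReal.ofReal p) :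
    P {ω | ξ 1 ω = 1 ∧ ∃ n, 1 ≤ n ∧ ladderS ξ n ω = 0} = ENNReal.ofReal p := by
  have hsqrt : Real.sqrt 2 ^ 2 = 2 := Real.sq_sqrt zero_le_two
  have hp0 : 0 ≤ p := by
    rw [hp, sub_nonneg]
    exact Real.one_le_sqrt.2 one_le_two
  have hp2 : p ^ 2 + 2 * p = 1 := by
    rw [hp]
    linear_combination hsqrt
  rw [← hprob 1 le_rfl]
  refine measure_congr (eventuallyEq_set.2 ?_)
  filter_upwards [ae_exists_ladderS_eq_zero hmeas P hindep hval hp0 hp2 hprob] with ω hω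
  exact ⟨And.left, fun h1 => ⟨h1, hω h1⟩⟩

end
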